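/- Let f, g, h : ℝ → ℝ be differentiable functions satisfying f' = g·h, g' = -f·h, h' = -f·g on ℝ. Assume R := √(f(0)² + g(0)²) = √(f(0)² + h(0)²) > 0 and g(0) ≠ 0. Then |h(0)| = |g(0)| > 0, and with t₀ := artanh(f(0)/R), for all t ∈ ℝ: f(t) = R·tanh(sign(g(0)h(0))·R·t + t₀), g(t) = sign(g(0))·R·sech(sign(g(0)h(0))·R·t + t₀), and h(t) = sign(h(0))·R·sech(sign(g(0)h(0))·R·t + t₀). Moreover f(t)² + g(t)² = R² and f(t)² + h(t)² = R² for all t ∈ ℝ. -/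

import Mathlib

/-!
Both `f² + g²` and `f² + h²` are first integrals of the system, so every solution stays in the
closed ball of radius `R` of `ℝ × ℝ × ℝ` (sup norm), on which the quadratic vector field is
Lipschitz. The explicit `tanh`/`sech` curve solves the same system, stays in the same ball and
has the same initial value (`tanh t₀ = f(0)/R` and `R / cosh t₀ = |g(0)| = |h(0)|`), so the
uniqueness theorem for Lipschitz ODEs identifies the two.
-/

/-- The real inverse hyperbolic tangent. -/
noncomputable def artanh (x : ℝ) : ℝ := Real.log ((1 + x) / (1 - x)) / 2

open Real hiding artanh
open Set Metric

def jacobiField (p : ℝ × ℝ × ℝ) : ℝ × ℝ × ℝ :=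
  (p.2.1 * p.2.2, -(p.1 * p.2.2), -(p.1 * p.2.1))

lemma contDiff_jacobiField {n : WithTop ℕ∞} : ContDiff ℝ n jacobiField := by
  unfold jacobiField; fun_prop

lemma exists_lipschitzOnWith_jacobiField (R : ℝ) :
    ∃ K, LipschitzOnWith K jacobiField (closedBall 0 R) :=
  contDiff_jacobiField.contDiffOn.exists_lipschitzOnWith one_ne_zero (convex_closedBall _ _)
    (isCompact_closedBall _ _)

lemma sq_add_sq_eq_of_hasDerivAt {u v w : ℝ → ℝ}
    (hu : ∀ t, HasDerivAt u (v t * w t) t) (hv : ∀ t, HasDerivAt v (-(u t * w t)) t) (t s : ℝ) :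
    u t ^ 2 + v t ^ 2 = u s ^ 2 + v s ^ 2 := by
  have hd : ∀ t, HasDerivAt (fun t => u t ^ 2 + v t ^ 2) 0 t := fun t => by
    refine (((hu t).pow 2).add ((hv t).pow 2)).congr_deriv ?_
    ring
  exact is_const_of_deriv_eq_zero (fun t => (hd t).differentiableAt) (fun t => (hd t).deriv) t s

lemma mem_closedBall_zero_of_sq_add_sq {R x y z : ℝ} (hR : 0 ≤ R)
    (hy : x ^ 2 + y ^ 2 = R ^ 2) (hz : x ^ 2 + z ^ 2 = R ^ 2) :
    (x, y, z) ∈ closedBall (0 : ℝ × ℝ × ℝ) R := by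
  simp only [mem_closedBall_zero_iff, norm_prod_le_iff, Real.norm_eq_abs]
  refine ⟨?_, ?_, ?_⟩ <;> apply abs_le_of_sq_le_sq _ hR <;> nlinarith

lemma Real.hasDerivAt_tanh (x : ℝ) : HasDerivAt tanh (1 / cosh x ^ 2) x := by
  have h := (hasDerivAt_sinh x).div (hasDerivAt_cosh x) (cosh_pos x).ne'
  rw [show tanh = sinh / cosh from funext tanh_eq_sinh_div_cosh, ← cosh_sq_sub_sinh_sq x]
  exact h.congr_deriv (by ring)

lemma Real.sign_mul_abs (r : ℝ) : sign r * |r| = r := by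
  rcases lt_trichotomy r 0 with hr | rfl | hr
  · rw [sign_of_neg hr, abs_of_neg hr]; ring
  · simp
  · rw [sign_of_pos hr, abs_of_pos hr]; ring

lemma Real.sign_mul (a b : ℝ) : sign (a * b) = sign a * sign b := by
  rcases lt_trichotomy a 0 with ha | ha | ha <;> rcases lt_trichotomy b 0 with hb | hb | hb <;>
    simp [sign_of_neg, sign_of_pos, ha, hb, mul_pos_of_neg_of_neg, mul_neg_of_neg_of_pos,
      mul_neg_of_pos_of_neg]

lemma Real.sign_sq_of_ne_zero {r : ℝ} (hr : r ≠ 0) : sign r ^ 2 = 1 := by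
  rcases sign_apply_eq_of_ne_zero r hr with h | h <;> simp [h]

lemma artanh_eq_real_artanh {x : ℝ} (hx : x ∈ Icc (-1) 1) : artanh x = Real.artanh x := by
  rw [Real.artanh_eq_half_log hx, artanh]; ring

noncomputable def tanhSechCurve (R σ a b t₀ t : ℝ) : ℝ × ℝ × ℝ :=
  (R * tanh (σ * R * t + t₀), a * R / cosh (σ * R * t + t₀), b * R / cosh (σ * R * t + t₀))

lemma hasDerivAt_tanhSechCurve {R σ a b : ℝ} (ha : a ^ 2 = 1) (hb : b ^ 2 = 1) (hσ : σ = a * b)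
    (t₀ t : ℝ) :
    HasDerivAt (tanhSechCurve R σ a b t₀) (jacobiField (tanhSechCurve R σ a b t₀ t)) t := by
  have hu : HasDerivAt (fun t => σ * R * t + t₀) (σ * R) t := by
    simpa using ((hasDerivAt_id t).const_mul (σ * R)).add_const t₀
  have htanh := (Real.hasDerivAt_tanh _).comp t hu
  have hsech := ((hasDerivAt_cosh _).comp t hu).inv (cosh_pos _).ne'
  have hcu := (cosh_pos (σ * R * t + t₀)).ne'
  refine ((htanh.const_mul R).prodMk ((hsech.const_mul (a * R)).prodMk
    (hsech.const_mul (b * R)))).congr_deriv ?_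
  simp only [jacobiField, tanhSechCurve, tanh_eq_sinh_div_cosh, Function.comp_def, Prod.mk.injEq]
  refine ⟨?_, ?_, ?_⟩ <;> field_simp
  · linear_combination R ^ 2 * hσ
  · linear_combination -R ^ 2 * sinh (R * σ * t + t₀) * (a * hσ + b * ha)
  · linear_combination -R ^ 2 * sinh (R * σ * t + t₀) * (b * hσ + a * hb)

lemma tanhSechCurve_mem_closedBall {R σ a b : ℝ} (hR : 0 ≤ R) (ha : a ^ 2 = 1) (hb : b ^ 2 = 1)
    (t₀ t : ℝ) : tanhSechCurve R σ a b t₀ t ∈ closedBall 0 R := by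
  rw [tanhSechCurve]
  generalize σ * R * t + t₀ = u
  have hcu := (cosh_pos u).ne'
  have hc := cosh_sq_sub_sinh_sq u
  apply mem_closedBall_zero_of_sq_add_sq hR <;> simp only [tanh_eq_sinh_div_cosh] <;> field_simp
  · linear_combination R ^ 2 * (ha - hc)
  · linear_combination R ^ 2 * (hb - hc)

lemma tanhSechCurve_zero {R x y z : ℝ} (hR : 0 < R) (hy : x ^ 2 + y ^ 2 = R ^ 2)
    (hz : x ^ 2 + z ^ 2 = R ^ 2) (hy0 : y ≠ 0) (σ : ℝ) :
    tanhSechCurve R σ (Real.sign y) (Real.sign z) (artanh (x / R)) 0 = (x, y, z) := by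
  have hx : x / R ∈ Ioo (-1) 1 := by
    have : (x / R) ^ 2 < 1 := by
      rw [div_pow, div_lt_one (by positivity)]
      nlinarith [sq_pos_of_ne_zero hy0]
    exact abs_lt.mp (sq_lt_one_iff_abs_lt_one _ |>.mp this)
  have hcosh : R / cosh (Real.artanh (x / R)) = |y| := by
    have h1 : 1 - (x / R) ^ 2 = (y / R) ^ 2 := by
      field_simp; linarith
    rw [cosh_artanh hx, h1, sqrt_sq_eq_abs, abs_div, abs_of_pos hR]
    field_simp
  have hz' : Real.sign z * |y| = z := by
    rw [← (sq_eq_sq_iff_abs_eq_abs z y).mp (by linarith), Real.sign_mul_abs]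
  simp only [tanhSechCurve, mul_zero, zero_add, artanh_eq_real_artanh (Ioo_subset_Icc_self hx),
    tanh_artanh hx, mul_div_assoc, hcosh, Real.sign_mul_abs, hz']
  field_simp

/-- The degenerate (hyperbolic) case of the Jacobi-elliptic ODE system
`f' = gh`, `g' = -fh`, `h' = -fg`. -/
theorem stmt_16 (f g h : ℝ → ℝ)
    (hf : ∀ t, HasDerivAt f (g t * h t) t)
    (hg : ∀ t, HasDerivAt g (-(f t * h t)) t)
    (hh : ∀ t, HasDerivAt h (-(f t * g t)) t)
    (R : ℝ) (hR : R = Real.sqrt (f 0 ^ 2 + g 0 ^ 2))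
    (hR' : R = Real.sqrt (f 0 ^ 2 + h 0 ^ 2))
    (hRpos : 0 < R) (hg0 : g 0 ≠ 0)
    (t₀ : ℝ) (ht₀ : t₀ = artanh (f 0 / R)) :
    |h 0| = |g 0| ∧ 0 < |g 0| ∧
    (∀ t : ℝ,
      f t = R * Real.tanh (Real.sign (g 0 * h 0) * R * t + t₀) ∧
      g t = Real.sign (g 0) * R / Real.cosh (Real.sign (g 0 * h 0) * R * t + t₀) ∧
      h t = Real.sign (h 0) * R / Real.cosh (Real.sign (g 0 * h 0) * R * t + t₀)) ∧
    (∀ t : ℝ, f t ^ 2 + g t ^ 2 = R ^ 2 ∧ f t ^ 2 + h t ^ 2 = R ^ 2) := by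
  have hfg (t : ℝ) : f t ^ 2 + g t ^ 2 = R ^ 2 := by
    rw [sq_add_sq_eq_of_hasDerivAt hf hg t 0, hR, sq_sqrt (by positivity)]
  have hfh (t : ℝ) : f t ^ 2 + h t ^ 2 = R ^ 2 := by
    rw [sq_add_sq_eq_of_hasDerivAt (fun t => (hf t).congr_deriv (mul_comm _ _)) hh t 0, hR',
      sq_sqrt (by positivity)]
  have habs : |h 0| = |g 0| := (sq_eq_sq_iff_abs_eq_abs _ _).mp (by linarith [hfg 0, hfh 0])
  have hh0 : h 0 ≠ 0 := abs_pos.mp (habs ▸ abs_pos.mpr hg0)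
  have hsol : (fun t => (f t, g t, h t)) =
      tanhSechCurve R (Real.sign (g 0 * h 0)) (Real.sign (g 0)) (Real.sign (h 0)) t₀ := by
    obtain ⟨K, hK⟩ := exists_lipschitzOnWith_jacobiField R
    have hg0' := Real.sign_sq_of_ne_zero hg0
    have hh0' := Real.sign_sq_of_ne_zero hh0
    refine ODE_solution_unique_univ (fun _ => hK)
      (fun t => ⟨(hf t).prodMk ((hg t).prodMk (hh t)),
        mem_closedBall_zero_of_sq_add_sq hRpos.le (hfg t) (hfh t)⟩)
      (fun t => ⟨hasDerivAt_tanhSechCurve hg0' hh0' (Real.sign_mul _ _) t₀ t,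
        tanhSechCurve_mem_closedBall hRpos.le hg0' hh0' t₀ t⟩) (t₀ := 0) ?_
    rw [ht₀, tanhSechCurve_zero hRpos (hfg 0) (hfh 0) hg0]
  refine ⟨habs, abs_pos.mpr hg0, fun t => ?_, fun t => ⟨hfg t, hfh t⟩⟩
  simpa [tanhSechCurve] using congrFun hsol t
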